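/- arXiv:0902.1849 — 7 statements merged into one kernel-verified Lean document; each statement's English description precedes it below -/
import Mathlib

section
/- Let c₂ ≥ c₁ > 0, let M ≥ 0, and let g : ℝ → ℝ be a measurable function satisfying c₁ ≤ g(y) ≤ c₂ for all y ∈ ℝ. Define ρ(z) = (M / (2 g(z))) · exp( − ∫₀^z y / g(y) dy ). Then for every z ∈ ℝ one has (M / (2 c₂)) · exp( − z² / (2 c₁) ) ≤ ρ(z) ≤ (M / (2 c₁)) · exp( − z² / (2 c₂) ). -/
/-!
Since `1 / c₂ ≤ 1 / g ≤ 1 / c₁`, the exponent `∫₀^z y / g(y) dy` lies between the Gaussian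
exponents `z² / (2 c₂)` and `z² / (2 c₁)`: for any `ψ ≥ 0`, `∫₀^z y ψ(y) dy ≥ 0` whatever the sign
of `z`, because `y` has the sign of `z` on the interval. The prefactor `M / (2 g(z))` is squeezed
in the same way, and both factors are monotone in the right direction.
-/

open MeasureTheory Set

theorem intervalIntegrable_id_mul_of_mem_Icc {φ : ℝ → ℝ} {a b : ℝ} (hφ : Measurable φ)
    (hφab : ∀ y, φ y ∈ Icc a b) (s t : ℝ) :
    IntervalIntegrable (fun y => y * φ y) volume s t := by
  have hbdd : IntervalIntegrable φ volume s t :=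
    (intervalIntegrable_iff.2 <| Measure.integrableOn_of_bounded (M := max |a| |b|)
      measure_Ioc_lt_top.ne hφ.aestronglyMeasurable <|
        ae_of_all _ fun y => abs_le_max_abs_abs (hφab y).1 (hφab y).2)
  exact hbdd.continuousOn_mul continuousOn_id

theorem integral_id_mul_nonneg {ψ : ℝ → ℝ} (hψ : ∀ y, 0 ≤ ψ y) (z : ℝ) :
    0 ≤ ∫ y in 0..z, y * ψ y := by
  rcases le_total 0 z with hz | hz
  · exact intervalIntegral.integral_nonneg hz fun y hy => mul_nonneg hy.1 (hψ y)
  · rw [intervalIntegral.integral_symm, ← intervalIntegral.integral_neg]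
    exact intervalIntegral.integral_nonneg hz fun y hy => by nlinarith [hy.2, hψ y]

theorem integral_id_mul_mem_Icc {φ : ℝ → ℝ} {a b : ℝ} (hφ : Measurable φ)
    (hφab : ∀ y, φ y ∈ Icc a b) (z : ℝ) :
    ∫ y in 0..z, y * φ y ∈ Icc (a * z ^ 2 / 2) (b * z ^ 2 / 2) := by
  have hint := intervalIntegrable_id_mul_of_mem_Icc hφ hφab 0 z
  have hlin (c : ℝ) : ∫ y in 0..z, y * c = c * z ^ 2 / 2 := by
    simp only [intervalIntegral.integral_mul_const, integral_id]; ring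
  have hlower := integral_id_mul_nonneg (fun y => sub_nonneg.2 (hφab y).1) z
  have hupper := integral_id_mul_nonneg (fun y => sub_nonneg.2 (hφab y).2) z
  have hint_lin (c : ℝ) : IntervalIntegrable (fun y => y * c) volume 0 z :=
    (continuous_id.mul continuous_const).intervalIntegrable 0 z
  simp only [mul_sub] at hlower hupper
  rw [intervalIntegral.integral_sub hint (hint_lin a), hlin] at hlower
  rw [intervalIntegral.integral_sub (hint_lin b) hint, hlin] at hupper
  constructor <;> linarith

theorem integral_id_div_mem_Icc {g : ℝ → ℝ} {c₁ c₂ : ℝ} (hc₁ : 0 < c₁) (hg : Measurable g)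
    (hglb : ∀ y, c₁ ≤ g y) (hgub : ∀ y, g y ≤ c₂) (z : ℝ) :
    ∫ y in 0..z, y / g y ∈ Icc (z ^ 2 / (2 * c₂)) (z ^ 2 / (2 * c₁)) := by
  have hbounds (y : ℝ) : (g y)⁻¹ ∈ Icc c₂⁻¹ c₁⁻¹ :=
    ⟨inv_anti₀ (hc₁.trans_le (hglb y)) (hgub y), inv_anti₀ hc₁ (hglb y)⟩
  simp only [div_eq_mul_inv]
  convert integral_id_mul_mem_Icc (φ := fun y => (g y)⁻¹) hg.inv hbounds z using 2 <;> ring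

theorem gaussian_density_bounds_general
    (c₁ c₂ M : ℝ) (hc₁ : 0 < c₁) (hM : 0 ≤ M)
    (g : ℝ → ℝ) (hgmeas : Measurable g)
    (hglb : ∀ y : ℝ, c₁ ≤ g y) (hgub : ∀ y : ℝ, g y ≤ c₂)
    (ρ : ℝ → ℝ)
    (hρ : ∀ z : ℝ, ρ z = M / (2 * g z) * Real.exp (-∫ y in (0:ℝ)..z, y / g y)) :
    ∀ z : ℝ,
      M / (2 * c₂) * Real.exp (-(z ^ 2) / (2 * c₁)) ≤ ρ z ∧
      ρ z ≤ M / (2 * c₁) * Real.exp (-(z ^ 2) / (2 * c₂)) := by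
  intro z
  obtain ⟨hlower, hupper⟩ := integral_id_div_mem_Icc hc₁ hgmeas hglb hgub z
  have hgz : 0 < g z := hc₁.trans_le (hglb z)
  rw [hρ z, neg_div, neg_div]
  constructor
  · gcongr
    exact hgub z
  · gcongr
    exact hglb z

/-- Nourdin–Viens density formula: Gaussian lower and upper bounds for the density
`ρ(z) = (M / (2 g(z))) * exp(-∫₀^z y / g(y) dy)` when `c₁ ≤ g ≤ c₂`. -/
theorem gaussian_density_bounds
    (c₁ c₂ M : ℝ) (hc₁ : 0 < c₁) (hc : c₁ ≤ c₂) (hM : 0 ≤ M)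
    (g : ℝ → ℝ) (hgmeas : Measurable g)
    (hglb : ∀ y : ℝ, c₁ ≤ g y) (hgub : ∀ y : ℝ, g y ≤ c₂)
    (ρ : ℝ → ℝ)
    (hρ : ∀ z : ℝ, ρ z = M / (2 * g z) * Real.exp (-∫ y in (0:ℝ)..z, y / g y)) :
    ∀ z : ℝ,
      M / (2 * c₂) * Real.exp (-(z ^ 2) / (2 * c₁)) ≤ ρ z ∧
      ρ z ≤ M / (2 * c₁) * Real.exp (-(z ^ 2) / (2 * c₂)) :=
  gaussian_density_bounds_general c₁ c₂ M hc₁ hM g hgmeas hglb hgub ρ hρ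
end

section
/- Let d ≥ 1, let μ be a nonzero nonnegative Borel measure on ℝ^d with ∫_{ℝ^d} (1 + |ξ|²)^{-1} μ(dξ) < ∞, and let T > 0. Then there exists a constant k₁ > 0 such that for all t ∈ [0, T]: k₁ · t ≤ ∫₀^t ∫_{ℝ^d} exp(−8π² s |ξ|²) μ(dξ) ds. -/
open MeasureTheory Real
open scoped Real

/-! The inner integral `I(s) = ∫ exp(-8π² s |ξ|²) μ(dξ)` is antitone in `s`, and `I(T) > 0` because
the integrand is everywhere positive and `μ ≠ 0`. Hence `∫₀^t I(s) ds ≥ t · I(T)` for `t ≤ T`, and any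
positive real below `I(T)` (which may be infinite) serves as `k₁`. -/

section

variable {E : Type*} [NormedAddCommGroup E] [MeasurableSpace E]

theorem antitone_lintegral_exp_neg_mul_sq_norm (μ : Measure E) {c : ℝ} (hc : 0 ≤ c) :
    Antitone fun s : ℝ => ∫⁻ ξ, ENNReal.ofReal (exp (-(c * s * ‖ξ‖ ^ 2))) ∂μ := by
  intro s s' hss'
  refine lintegral_mono fun ξ => ENNReal.ofReal_le_ofReal (exp_le_exp.2 (neg_le_neg ?_))
  gcongr

theorem lintegral_exp_neg_mul_sq_norm_pos [OpensMeasurableSpace E] {μ : Measure E} (hμ : μ ≠ 0)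
    (c s : ℝ) : 0 < ∫⁻ ξ, ENNReal.ofReal (exp (-(c * s * ‖ξ‖ ^ 2))) ∂μ := by
  have hmeas : Measurable fun ξ : E => ENNReal.ofReal (exp (-(c * s * ‖ξ‖ ^ 2))) := by
    fun_prop
  have hsupport : Function.support (fun ξ : E => ENNReal.ofReal (exp (-(c * s * ‖ξ‖ ^ 2)))) =
      Set.univ :=
    Function.support_eq_univ fun ξ => (ENNReal.ofReal_pos.2 (exp_pos _)).ne'
  rw [lintegral_pos_iff_support hmeas, hsupport, pos_iff_ne_zero, Ne, Measure.measure_univ_eq_zero]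
  exact hμ

end

theorem ofReal_mul_le_setLIntegral_Ioc_of_antitone {F : ℝ → ENNReal} (hF : Antitone F)
    {a b T : ℝ} (hbT : b ≤ T) :
    ENNReal.ofReal (b - a) * F T ≤ ∫⁻ s in Set.Ioc a b, F s := by
  rw [← Real.volume_Ioc, mul_comm, ← setLIntegral_const]
  exact setLIntegral_mono' measurableSet_Ioc fun s hs => hF (hs.2.trans hbT)

theorem heat_fourier_lower_bound_general
    (d : ℕ)
    (μ : Measure (EuclideanSpace ℝ (Fin d))) (hμ : μ ≠ 0)
    (T : ℝ) :
    ∃ k₁ > (0 : ℝ), ∀ t ∈ Set.Icc (0 : ℝ) T,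
      ENNReal.ofReal (k₁ * t) ≤
        ∫⁻ s in Set.Ioc (0 : ℝ) t,
          ∫⁻ ξ, ENNReal.ofReal (Real.exp (-(8 * π ^ 2 * s * ‖ξ‖ ^ 2))) ∂μ := by
  obtain ⟨k, hk0, hk_pos, hk_le⟩ := ENNReal.lt_iff_exists_real_btwn.1
    (lintegral_exp_neg_mul_sq_norm_pos hμ (8 * π ^ 2) T)
  refine ⟨k, ENNReal.ofReal_pos.1 hk_pos, fun t ⟨ht0, htT⟩ => ?_⟩
  calc ENNReal.ofReal (k * t) = ENNReal.ofReal (t - 0) * ENNReal.ofReal k := by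
        rw [sub_zero, mul_comm, ENNReal.ofReal_mul ht0]
    _ ≤ ENNReal.ofReal (t - 0) *
          ∫⁻ ξ, ENNReal.ofReal (exp (-(8 * π ^ 2 * T * ‖ξ‖ ^ 2))) ∂μ := by
        gcongr
    _ ≤ _ := ofReal_mul_le_setLIntegral_Ioc_of_antitone
        (antitone_lintegral_exp_neg_mul_sq_norm μ (by positivity)) htT

/-- Lower bound `k₁ t ≤ ∫₀^t ∫_{ℝ^d} |𝓕G_s(ξ)|² μ(dξ) ds` for the heat kernel,
where `|𝓕G_s(ξ)|² = exp(-8π² s |ξ|²)`, under Dalang's condition on the nonzero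
spectral measure `μ`. -/
theorem heat_fourier_lower_bound
    (d : ℕ) (hd : 1 ≤ d)
    (μ : Measure (EuclideanSpace ℝ (Fin d))) (hμ : μ ≠ 0)
    (hdalang : ∫⁻ ξ, ENNReal.ofReal ((1 + ‖ξ‖ ^ 2)⁻¹) ∂μ < ⊤)
    (T : ℝ) (hT : 0 < T) :
    ∃ k₁ > (0 : ℝ), ∀ t ∈ Set.Icc (0 : ℝ) T,
      ENNReal.ofReal (k₁ * t) ≤
        ∫⁻ s in Set.Ioc (0 : ℝ) t,
          ∫⁻ ξ, ENNReal.ofReal (Real.exp (-(8 * π ^ 2 * s * ‖ξ‖ ^ 2))) ∂μ :=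
  heat_fourier_lower_bound_general d μ hμ T
end

section
/- Let d ≥ 1, let η ∈ (0,1), and let μ be a nonnegative Borel measure on ℝ^d with ∫_{ℝ^d} (1 + |ξ|²)^{-η} μ(dξ) < ∞. Let T > 0 and β ∈ (0, 1−η]. Then there exists a constant k₂ > 0 such that for all t ∈ [0, T]: ∫₀^t ∫_{ℝ^d} exp(−8π² s |ξ|²) μ(dξ) ds ≤ k₂ · t^β. -/
open MeasureTheory Real
open scoped Real

/-!
With `a = 8π²`, write `exp (-a s |ξ|²) = exp (a s) · exp (-a s (1 + |ξ|²))` and use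
`exp (-y) ≤ y ^ (-η)` (valid for `0 ≤ η ≤ 1`): the inner integral is at most
`exp (a T) · (a s) ^ (-η) · ∫ (1 + |ξ|²) ^ (-η) dμ`. Since `η < 1`, `s ^ (-η)` integrates over
`(0, t]` to `t ^ (1 - η) / (1 - η)`, and `t ^ (1 - η) ≤ T ^ (1 - η - β) · t ^ β` for `t ≤ T`.
-/
theorem Real.rpow_le_exp {y η : ℝ} (hy : 0 ≤ y) (hη0 : 0 ≤ η) (hη1 : η ≤ 1) :
    y ^ η ≤ exp y := by
  rcases le_total y 1 with h | h
  · calc y ^ η ≤ 1 := rpow_le_one hy h hη0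
      _ ≤ exp y := one_le_exp hy
  · calc y ^ η ≤ y ^ (1 : ℝ) := rpow_le_rpow_of_exponent_le h hη1
      _ = y := rpow_one y
      _ ≤ exp y := by linarith [add_one_le_exp y]

theorem Real.exp_neg_le_rpow_neg {y η : ℝ} (hy : 0 < y) (hη0 : 0 ≤ η) (hη1 : η ≤ 1) :
    exp (-y) ≤ y ^ (-η) := by
  rw [rpow_neg hy.le, exp_neg]
  exact inv_anti₀ (rpow_pos_of_pos hy η) (rpow_le_exp hy.le hη0 hη1)

theorem Real.exp_neg_mul_le {y x η : ℝ} (hy : 0 < y) (hx : 0 ≤ x) (hη0 : 0 ≤ η) (hη1 : η ≤ 1) :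
    exp (-(y * x)) ≤ exp y * y ^ (-η) * (1 + x) ^ (-η) := by
  have hx1 : 0 < 1 + x := by linarith
  calc exp (-(y * x)) = exp y * exp (-(y * (1 + x))) := by rw [← exp_add]; ring_nf
    _ ≤ exp y * (y * (1 + x)) ^ (-η) := by
      gcongr; exact exp_neg_le_rpow_neg (mul_pos hy hx1) hη0 hη1
    _ = exp y * y ^ (-η) * (1 + x) ^ (-η) := by
      rw [mul_rpow hy.le hx1.le, mul_assoc]

theorem lintegral_exp_neg_mul_norm_sq_le {E : Type*} [NormedAddCommGroup E] [MeasurableSpace E]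
    (μ : Measure E) {y η : ℝ} (hy : 0 < y) (hη0 : 0 ≤ η) (hη1 : η ≤ 1) :
    ∫⁻ ξ, ENNReal.ofReal (exp (-(y * ‖ξ‖ ^ 2))) ∂μ ≤
      ENNReal.ofReal (exp y * y ^ (-η)) * ∫⁻ ξ, ENNReal.ofReal ((1 + ‖ξ‖ ^ 2) ^ (-η)) ∂μ := by
  rw [← lintegral_const_mul' _ _ ENNReal.ofReal_ne_top]
  refine lintegral_mono fun ξ => ?_
  rw [← ENNReal.ofReal_mul (by positivity)]
  exact ENNReal.ofReal_le_ofReal (exp_neg_mul_le hy (by positivity) hη0 hη1)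

theorem lintegral_Ioc_rpow_neg {t η : ℝ} (ht : 0 ≤ t) (hη : η < 1) :
    ∫⁻ s in Set.Ioc 0 t, ENNReal.ofReal (s ^ (-η)) = ENNReal.ofReal (t ^ (1 - η) / (1 - η)) := by
  have hint : IntervalIntegrable (fun s : ℝ => s ^ (-η)) volume 0 t :=
    intervalIntegral.intervalIntegrable_rpow' (by linarith)
  rw [← ofReal_integral_eq_lintegral_ofReal hint.1
    (ae_restrict_of_forall_mem measurableSet_Ioc fun s hs => rpow_nonneg hs.1.le _),
    ← intervalIntegral.integral_of_le ht, integral_rpow (Or.inl (by linarith)),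
    zero_rpow (by linarith), sub_zero, neg_add_eq_sub]

theorem lintegral_Ioc_exp_mul_rpow_neg_le {a t T η : ℝ} (ha : 0 < a) (ht : 0 ≤ t) (htT : t ≤ T)
    (hη : η < 1) :
    ∫⁻ s in Set.Ioc 0 t, ENNReal.ofReal (exp (a * s) * (a * s) ^ (-η)) ≤
      ENNReal.ofReal (exp (a * T) * a ^ (-η) * (t ^ (1 - η) / (1 - η))) := by
  rw [ENNReal.ofReal_mul (by positivity), ← lintegral_Ioc_rpow_neg ht hη,
    ← lintegral_const_mul' _ _ ENNReal.ofReal_ne_top]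
  refine setLIntegral_mono' measurableSet_Ioc fun s hs => ?_
  rw [← ENNReal.ofReal_mul (by positivity), mul_rpow ha.le hs.1.le, ← mul_assoc]
  gcongr
  · exact rpow_nonneg hs.1.le _
  · exact hs.2.trans htT

theorem Real.rpow_le_rpow_sub_mul_rpow {t T β γ : ℝ} (ht : 0 ≤ t) (htT : t ≤ T) (hβγ : β ≤ γ)
    (hγ : γ ≠ 0) : t ^ γ ≤ T ^ (γ - β) * t ^ β := by
  calc t ^ γ = t ^ (γ - β) * t ^ β := by rw [← rpow_add' ht (by simpa using hγ), sub_add_cancel]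
    _ ≤ T ^ (γ - β) * t ^ β := by gcongr

theorem heat_fourier_upper_bound_general
    (d : ℕ)
    (η : ℝ) (hη : η ∈ Set.Ioo (0 : ℝ) 1)
    (μ : Measure (EuclideanSpace ℝ (Fin d)))
    (hμint : ∫⁻ ξ, ENNReal.ofReal ((1 + ‖ξ‖ ^ 2) ^ (-η)) ∂μ < ⊤)
    (T : ℝ) (hT : 0 < T)
    (β : ℝ) (hβ : β ∈ Set.Ioc (0 : ℝ) (1 - η)) :
    ∃ k₂ > (0 : ℝ), ∀ t ∈ Set.Icc (0 : ℝ) T,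
      (∫⁻ s in Set.Ioc (0 : ℝ) t,
          ∫⁻ ξ, ENNReal.ofReal (Real.exp (-(8 * π ^ 2 * s * ‖ξ‖ ^ 2))) ∂μ)
        ≤ ENNReal.ofReal (k₂ * t ^ β) := by
  obtain ⟨hη0, hη1⟩ := hη
  have ha : 0 < 8 * π ^ 2 := by positivity
  set I := ∫⁻ ξ, ENNReal.ofReal ((1 + ‖ξ‖ ^ 2) ^ (-η)) ∂μ
  set C := exp (8 * π ^ 2 * T) * (8 * π ^ 2) ^ (-η) * (I.toReal + 1) / (1 - η)
  have hC : 0 < C := div_pos (by positivity) (by linarith)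
  refine ⟨C * T ^ (1 - η - β), mul_pos hC (rpow_pos_of_pos hT _), fun t ⟨ht0, htT⟩ => ?_⟩
  have hI : I ≤ ENNReal.ofReal (I.toReal + 1) :=
    (ENNReal.le_ofReal_iff_toReal_le hμint.ne (by positivity)).2 (by linarith)
  calc (∫⁻ s in Set.Ioc 0 t, ∫⁻ ξ, ENNReal.ofReal (exp (-(8 * π ^ 2 * s * ‖ξ‖ ^ 2))) ∂μ)
      ≤ ∫⁻ s in Set.Ioc 0 t, ENNReal.ofReal (exp (8 * π ^ 2 * s) * (8 * π ^ 2 * s) ^ (-η)) * I :=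
        setLIntegral_mono' measurableSet_Ioc fun s hs =>
          lintegral_exp_neg_mul_norm_sq_le μ (mul_pos ha hs.1) hη0.le hη1.le
    _ ≤ ENNReal.ofReal (exp (8 * π ^ 2 * T) * (8 * π ^ 2) ^ (-η) * (t ^ (1 - η) / (1 - η))) *
          ENNReal.ofReal (I.toReal + 1) := by
        rw [lintegral_mul_const' _ _ hμint.ne]
        exact mul_le_mul' (lintegral_Ioc_exp_mul_rpow_neg_le ha ht0 htT hη1) hI
    _ = ENNReal.ofReal (C * t ^ (1 - η)) := by
        rw [← ENNReal.ofReal_mul (by positivity)]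
        congr 1
        simp only [C]
        ring
    _ ≤ ENNReal.ofReal (C * T ^ (1 - η - β) * t ^ β) := by
        rw [mul_assoc]
        gcongr
        exact rpow_le_rpow_sub_mul_rpow ht0 htT hβ.2 (by linarith)

/-- Upper bound `∫₀^t ∫_{ℝ^d} |𝓕G_s(ξ)|² μ(dξ) ds ≤ k₂ t^β` for the heat kernel,
where `|𝓕G_s(ξ)|² = exp(-8π² s |ξ|²)`, under Hypothesis `H_η` on the spectral
measure `μ`, for any `β ∈ (0, 1-η]`. -/
theorem heat_fourier_upper_bound
    (d : ℕ) (hd : 1 ≤ d)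
    (η : ℝ) (hη : η ∈ Set.Ioo (0 : ℝ) 1)
    (μ : Measure (EuclideanSpace ℝ (Fin d)))
    (hμint : ∫⁻ ξ, ENNReal.ofReal ((1 + ‖ξ‖ ^ 2) ^ (-η)) ∂μ < ⊤)
    (T : ℝ) (hT : 0 < T)
    (β : ℝ) (hβ : β ∈ Set.Ioc (0 : ℝ) (1 - η)) :
    ∃ k₂ > (0 : ℝ), ∀ t ∈ Set.Icc (0 : ℝ) T,
      (∫⁻ s in Set.Ioc (0 : ℝ) t,
          ∫⁻ ξ, ENNReal.ofReal (Real.exp (-(8 * π ^ 2 * s * ‖ξ‖ ^ 2))) ∂μ)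
        ≤ ENNReal.ofReal (k₂ * t ^ β) :=
  heat_fourier_upper_bound_general d η hη μ hμint T hT β hβ
end

section
/- There exists a constant c₁ > 0 such that for every t ≥ 0 and every r > 0: c₁ · min(t, t³) / (1 + r²) ≤ ∫₀^t ( sin(2π s r) / (2π r) )² ds. -/
open MeasureTheory Real
open scoped Real

/-!
With `a = 2πr` the integrand is `sin² (a s) / a²`. Once `a t ≥ 1` the oscillation of `sin²` has
averaged out and `∫₀^t sin² (a s) ds ≥ t / 4`, which gives `≳ t / r²`. Before that, Jordan's
inequality `sin x ≥ 2x/π` on `[0, π/2]` gives `sin² (a s) ≥ 4 a² s² / π²`, hence `≳ t³`.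
-/

lemma integral_sin_mul_sq {a : ℝ} (ha : a ≠ 0) (t : ℝ) :
    ∫ s in (0 : ℝ)..t, sin (a * s) ^ 2 = (t - sin (a * t) * cos (a * t) / a) / 2 := by
  rw [intervalIntegral.integral_comp_mul_left (fun x => sin x ^ 2) ha, integral_sin_sq, smul_eq_mul]
  simp only [mul_zero, sin_zero, cos_zero, zero_mul, zero_sub, sub_zero]
  field_simp
  ring

lemma sin_mul_cos_le_half (x : ℝ) : sin x * cos x ≤ 1 / 2 := by
  nlinarith [sq_nonneg (sin x - cos x), sin_sq_add_cos_sq x]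

lemma quarter_le_integral_sin_mul_sq {a t : ℝ} (ha : 0 < a) (hat : 1 ≤ a * t) :
    t / 4 ≤ ∫ s in (0 : ℝ)..t, sin (a * s) ^ 2 := by
  rw [integral_sin_mul_sq ha.ne']
  have : sin (a * t) * cos (a * t) / a ≤ t / 2 := by
    rw [div_le_iff₀ ha]
    nlinarith [sin_mul_cos_le_half (a * t)]
  linarith

lemma cube_le_integral_sin_mul_sq {a t : ℝ} (ha : 0 ≤ a) (ht : 0 ≤ t) (hat : a * t ≤ π / 2) :
    4 * a ^ 2 * t ^ 3 / (3 * π ^ 2) ≤ ∫ s in (0 : ℝ)..t, sin (a * s) ^ 2 := by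
  have jordan : ∀ s ∈ Set.Icc 0 t, (2 / π * (a * s)) ^ 2 ≤ sin (a * s) ^ 2 := by
    rintro s ⟨hs0, hst⟩
    have has : 0 ≤ a * s := mul_nonneg ha hs0
    have has' : a * s ≤ π / 2 := (mul_le_mul_of_nonneg_left hst ha).trans hat
    exact pow_le_pow_left₀ (by positivity) (mul_le_sin has has') 2
  calc 4 * a ^ 2 * t ^ 3 / (3 * π ^ 2)
      = ∫ s in (0 : ℝ)..t, (2 / π * (a * s)) ^ 2 := by
        simp only [mul_pow, ← mul_assoc, intervalIntegral.integral_const_mul, integral_pow]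
        field_simp
        ring
    _ ≤ ∫ s in (0 : ℝ)..t, sin (a * s) ^ 2 :=
        intervalIntegral.integral_mono_on ht ((by fun_prop : Continuous _).intervalIntegrable _ _)
          ((by fun_prop : Continuous _).intervalIntegrable _ _) jordan

/-- Lower bound for the time-integrated squared Fourier transform of the wave kernel:
`c₁ min(t, t³)/(1 + r²) ≤ ∫₀^t (sin(2πsr)/(2πr))² ds`. -/
theorem wave_fourier_lower_bound :
    ∃ c₁ > (0 : ℝ), ∀ t : ℝ, 0 ≤ t → ∀ r : ℝ, 0 < r →
      c₁ * min t (t ^ 3) / (1 + r ^ 2)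
        ≤ ∫ s in (0 : ℝ)..t, (Real.sin (2 * π * s * r) / (2 * π * r)) ^ 2 := by
  refine ⟨1 / (16 * π ^ 2), by positivity, fun t ht r hr => ?_⟩
  set a := 2 * π * r with ha_def
  have ha : 0 < a := by positivity
  have hintegral : ∫ s in (0 : ℝ)..t, (sin (2 * π * s * r) / a) ^ 2
      = (∫ s in (0 : ℝ)..t, sin (a * s) ^ 2) / a ^ 2 := by
    simp only [div_pow, intervalIntegral.integral_div, ha_def, mul_right_comm _ r]
  rw [hintegral, le_div_iff₀ (by positivity)]
  have hmin : 0 ≤ min t (t ^ 3) := le_min ht (by positivity)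
  rcases le_or_gt 1 (a * t) with hat | hat
  · have hlower := quarter_le_integral_sin_mul_sq ha hat
    calc 1 / (16 * π ^ 2) * min t (t ^ 3) / (1 + r ^ 2) * a ^ 2
        ≤ 1 / (16 * π ^ 2) * t / r ^ 2 * a ^ 2 := by
          gcongr
          · exact min_le_left _ _
          · linarith
      _ = t / 4 := by field_simp; ring
      _ ≤ _ := hlower
  · have hlower := cube_le_integral_sin_mul_sq ha.le ht (by linarith [pi_gt_three])
    calc 1 / (16 * π ^ 2) * min t (t ^ 3) / (1 + r ^ 2) * a ^ 2
        ≤ 1 / (16 * π ^ 2) * t ^ 3 * a ^ 2 := by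
          rw [mul_div_assoc]
          gcongr
          exact (div_le_self hmin (le_add_of_nonneg_right (sq_nonneg r))).trans (min_le_right _ _)
      _ = 3 / 64 * (4 * a ^ 2 * t ^ 3 / (3 * π ^ 2)) := by field_simp; ring
      _ ≤ 4 * a ^ 2 * t ^ 3 / (3 * π ^ 2) := by
          linarith [show 0 ≤ 4 * a ^ 2 * t ^ 3 / (3 * π ^ 2) by positivity]
      _ ≤ _ := hlower
end

section
/- Let d ≥ 1, let η ∈ (0,1), let μ be a nonnegative Borel measure on ℝ^d with ∫_{ℝ^d} (1 + |ξ|²)^{-η} μ(dξ) < ∞, and let T > 0. Define f_s(ξ) = ( sin(2π s |ξ|) / (2π |ξ|) )² for ξ ≠ 0 and f_s(0) = s². Then there exists a constant d₃ > 0 such that for all t ∈ [0, T]: ∫₀^t ∫_{ℝ^d} f_s(ξ) μ(dξ) ds ≤ d₃ · t^{3−2η}. -/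
/-! The squared wave symbol is at most `s²`, and for `s ≤ T` also at most `(1 + T²) / (1 + |ξ|²)`
(since `|ξ|² (sin(2πs|ξ|)/(2π|ξ|))² ≤ 1`). Interpolating between these two bounds with weights
`1 - η` and `η` gives `f_s(ξ) ≤ (1 + T²)^η s^{2-2η} (1 + |ξ|²)^{-η}`, whose `μ`-integral is finite
by Hypothesis `H_η`; integrating `s^{2-2η}` over `(0, t]` produces `t^{3-2η} / (3 - 2η)`. -/

open MeasureTheory Real
open scoped Real Classical

lemma le_rpow_mul_rpow_of_le_of_le {v a b θ : ℝ} (hv : 0 ≤ v) (ha : v ≤ a) (hb : v ≤ b)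
    (hθ₀ : 0 ≤ θ) (hθ₁ : θ ≤ 1) : v ≤ a ^ (1 - θ) * b ^ θ :=
  calc v = v ^ (1 - θ) * v ^ θ := by rw [← rpow_add' hv (by norm_num), sub_add_cancel, rpow_one]
    _ ≤ a ^ (1 - θ) * b ^ θ :=
      mul_le_mul (rpow_le_rpow hv ha (by linarith)) (rpow_le_rpow hv hb hθ₀) (rpow_nonneg hv _)
        (rpow_nonneg (hv.trans ha) _)

lemma setLIntegral_Ioc_zero_rpow {p t : ℝ} (hp : -1 < p) (ht : 0 ≤ t) :
    ∫⁻ s in Set.Ioc 0 t, ENNReal.ofReal (s ^ p) = ENNReal.ofReal (t ^ (p + 1) / (p + 1)) := by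
  have hint : IntegrableOn (fun s : ℝ => s ^ p) (Set.Ioc 0 t) :=
    (intervalIntegral.intervalIntegrable_rpow' hp).1
  rw [← ofReal_integral_eq_lintegral_ofReal hint
      ((ae_restrict_mem measurableSet_Ioc).mono fun s hs => rpow_nonneg hs.1.le p),
    ← intervalIntegral.integral_of_le ht, integral_rpow (Or.inl hp),
    zero_rpow (by linarith), sub_zero]

section WaveSymbol

variable {E : Type*} [NormedAddCommGroup E]

noncomputable def waveSymbolSq (s : ℝ) (ξ : E) : ℝ :=
  if ξ = 0 then s ^ 2 else (sin (2 * π * s * ‖ξ‖) / (2 * π * ‖ξ‖)) ^ 2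

lemma waveSymbolSq_nonneg (s : ℝ) (ξ : E) : 0 ≤ waveSymbolSq s ξ := by
  unfold waveSymbolSq; split_ifs <;> positivity

lemma waveSymbolSq_le_sq (s : ℝ) (ξ : E) : waveSymbolSq s ξ ≤ s ^ 2 := by
  unfold waveSymbolSq
  split_ifs with hξ
  · rfl
  · have : 0 < ‖ξ‖ := norm_pos_iff.2 hξ
    rw [div_pow, div_le_iff₀ (by positivity)]
    calc sin (2 * π * s * ‖ξ‖) ^ 2 ≤ (2 * π * s * ‖ξ‖) ^ 2 := sin_sq_le_sq
      _ = s ^ 2 * (2 * π * ‖ξ‖) ^ 2 := by ring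

lemma norm_sq_mul_waveSymbolSq_le_one (s : ℝ) (ξ : E) : ‖ξ‖ ^ 2 * waveSymbolSq s ξ ≤ 1 := by
  unfold waveSymbolSq
  split_ifs with hξ
  · simp [hξ]
  · have : 0 < ‖ξ‖ := norm_pos_iff.2 hξ
    rw [div_pow, mul_div_assoc', div_le_one (by positivity)]
    calc ‖ξ‖ ^ 2 * sin (2 * π * s * ‖ξ‖) ^ 2 ≤ ‖ξ‖ ^ 2 * 1 := by gcongr; exact sin_sq_le_one _
      _ ≤ (2 * π * ‖ξ‖) ^ 2 := by
        rw [mul_one, mul_pow]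
        exact le_mul_of_one_le_left (by positivity) (by nlinarith [pi_gt_three])

lemma waveSymbolSq_le_div (s : ℝ) (ξ : E) :
    waveSymbolSq s ξ ≤ (1 + s ^ 2) / (1 + ‖ξ‖ ^ 2) := by
  rw [le_div_iff₀ (by positivity)]
  linarith [waveSymbolSq_le_sq s ξ, norm_sq_mul_waveSymbolSq_le_one s ξ]

lemma waveSymbolSq_le_rpow {η s T : ℝ} (hη₀ : 0 ≤ η) (hη₁ : η ≤ 1) (hs : 0 ≤ s) (hsT : s ≤ T)
    (ξ : E) :
    waveSymbolSq s ξ ≤ (1 + T ^ 2) ^ η * s ^ (2 - 2 * η) * (1 + ‖ξ‖ ^ 2) ^ (-η) := by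
  have hdecay : waveSymbolSq s ξ ≤ (1 + T ^ 2) / (1 + ‖ξ‖ ^ 2) :=
    (waveSymbolSq_le_div s ξ).trans (by gcongr)
  calc waveSymbolSq s ξ ≤ (s ^ 2) ^ (1 - η) * ((1 + T ^ 2) / (1 + ‖ξ‖ ^ 2)) ^ η :=
        le_rpow_mul_rpow_of_le_of_le (waveSymbolSq_nonneg s ξ) (waveSymbolSq_le_sq s ξ) hdecay
          hη₀ hη₁
    _ = (1 + T ^ 2) ^ η * s ^ (2 - 2 * η) * (1 + ‖ξ‖ ^ 2) ^ (-η) := by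
        rw [← rpow_natCast, ← rpow_mul hs, div_rpow (by positivity) (by positivity),
          rpow_neg (by positivity)]
        push_cast
        ring_nf

variable [MeasurableSpace E]

lemma lintegral_waveSymbolSq_le {η s T : ℝ} (hη₀ : 0 ≤ η) (hη₁ : η ≤ 1) (hs : 0 ≤ s)
    (hsT : s ≤ T) (μ : Measure E) :
    ∫⁻ ξ, ENNReal.ofReal (waveSymbolSq s ξ) ∂μ ≤ ENNReal.ofReal ((1 + T ^ 2) ^ η) *
      ENNReal.ofReal (s ^ (2 - 2 * η)) * ∫⁻ ξ, ENNReal.ofReal ((1 + ‖ξ‖ ^ 2) ^ (-η)) ∂μ := by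
  rw [← lintegral_const_mul' _ _ (by finiteness)]
  gcongr with ξ
  rw [← ENNReal.ofReal_mul (by positivity), ← ENNReal.ofReal_mul (by positivity)]
  exact ENNReal.ofReal_le_ofReal (waveSymbolSq_le_rpow hη₀ hη₁ hs hsT ξ)

end WaveSymbol

theorem wave_fourier_spectral_upper_bound_general
    (d : ℕ)
    (η : ℝ) (hη : η ∈ Set.Ioo (0 : ℝ) 1)
    (μ : Measure (EuclideanSpace ℝ (Fin d)))
    (hμint : ∫⁻ ξ, ENNReal.ofReal ((1 + ‖ξ‖ ^ 2) ^ (-η)) ∂μ < ⊤)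
    (T : ℝ)
    (f : ℝ → EuclideanSpace ℝ (Fin d) → ℝ)
    (hf : ∀ (s : ℝ) (ξ : EuclideanSpace ℝ (Fin d)),
      f s ξ = if ξ = 0 then s ^ 2
              else (Real.sin (2 * π * s * ‖ξ‖) / (2 * π * ‖ξ‖)) ^ 2) :
    ∃ d₃ > (0 : ℝ), ∀ t ∈ Set.Icc (0 : ℝ) T,
      (∫⁻ s in Set.Ioc (0 : ℝ) t, ∫⁻ ξ, ENNReal.ofReal (f s ξ) ∂μ)
        ≤ ENNReal.ofReal (d₃ * t ^ (3 - 2 * η)) := by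
  obtain ⟨hη₀, hη₁⟩ := hη
  -- `congr` reconciles the two `Decidable (ξ = 0)` instances.
  have hf' : f = waveSymbolSq := funext₂ fun s ξ => by rw [hf, waveSymbolSq]; congr
  set K := ∫⁻ ξ, ENNReal.ofReal ((1 + ‖ξ‖ ^ 2) ^ (-η)) ∂μ
  set M := K.toReal + 1
  have hKM : K ≤ ENNReal.ofReal M := by
    rw [ENNReal.le_ofReal_iff_toReal_le hμint.ne (by positivity)]; linarith
  have hp : (2 - 2 * η) + 1 = 3 - 2 * η := by ring
  have h3 : 0 < 3 - 2 * η := by linarith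
  refine ⟨(1 + T ^ 2) ^ η * M / (3 - 2 * η), by positivity, fun t ht => ?_⟩
  calc ∫⁻ s in Set.Ioc 0 t, ∫⁻ ξ, ENNReal.ofReal (f s ξ) ∂μ
      ≤ ∫⁻ s in Set.Ioc 0 t, ENNReal.ofReal ((1 + T ^ 2) ^ η) *
          ENNReal.ofReal (s ^ (2 - 2 * η)) * K :=
        setLIntegral_mono' measurableSet_Ioc fun s hs => hf' ▸
          lintegral_waveSymbolSq_le hη₀.le hη₁.le hs.1.le (hs.2.trans ht.2) μ
    _ = ENNReal.ofReal ((1 + T ^ 2) ^ η) * ENNReal.ofReal (t ^ (3 - 2 * η) / (3 - 2 * η)) * K := by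
        rw [lintegral_mul_const' _ _ hμint.ne, lintegral_const_mul' _ _ (by finiteness),
          setLIntegral_Ioc_zero_rpow (by linarith) ht.1, hp]
    _ ≤ ENNReal.ofReal ((1 + T ^ 2) ^ η) * ENNReal.ofReal (t ^ (3 - 2 * η) / (3 - 2 * η)) *
          ENNReal.ofReal M := by gcongr
    _ = ENNReal.ofReal ((1 + T ^ 2) ^ η * M / (3 - 2 * η) * t ^ (3 - 2 * η)) := by
        have : 0 ≤ t ^ (3 - 2 * η) := rpow_nonneg ht.1 _
        rw [← ENNReal.ofReal_mul (by positivity), ← ENNReal.ofReal_mul (by positivity)]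
        ring_nf

/-- Upper bound `∫₀^t ∫_{ℝ^d} |𝓕Γ^d_s(ξ)|² μ(dξ) ds ≤ d₃ t^{3-2η}` for the wave
kernel, where `|𝓕Γ^d_s(ξ)|² = (sin(2πs|ξ|)/(2π|ξ|))²` (with value `s²` at `ξ = 0`),
under Hypothesis `H_η` on the spectral measure `μ`. -/
theorem wave_fourier_spectral_upper_bound
    (d : ℕ) (hd : 1 ≤ d)
    (η : ℝ) (hη : η ∈ Set.Ioo (0 : ℝ) 1)
    (μ : Measure (EuclideanSpace ℝ (Fin d)))
    (hμint : ∫⁻ ξ, ENNReal.ofReal ((1 + ‖ξ‖ ^ 2) ^ (-η)) ∂μ < ⊤)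
    (T : ℝ) (hT : 0 < T)
    (f : ℝ → EuclideanSpace ℝ (Fin d) → ℝ)
    (hf : ∀ (s : ℝ) (ξ : EuclideanSpace ℝ (Fin d)),
      f s ξ = if ξ = 0 then s ^ 2
              else (Real.sin (2 * π * s * ‖ξ‖) / (2 * π * ‖ξ‖)) ^ 2) :
    ∃ d₃ > (0 : ℝ), ∀ t ∈ Set.Icc (0 : ℝ) T,
      (∫⁻ s in Set.Ioc (0 : ℝ) t, ∫⁻ ξ, ENNReal.ofReal (f s ξ) ∂μ)
        ≤ ENNReal.ofReal (d₃ * t ^ (3 - 2 * η)) :=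
  wave_fourier_spectral_upper_bound_general d η hη μ hμint T f hf
end

section
/- Let d ≥ 1 and let μ be a nonzero nonnegative Borel measure on ℝ^d with ∫_{ℝ^d} (1 + |ξ|²)^{-1} μ(dξ) < ∞. Define f_s(ξ) = ( sin(2π s |ξ|) / (2π |ξ|) )² for ξ ≠ 0 and f_s(0) = s². Then there exist constants d₁, d₂ > 0 such that for all t ∈ [0, 1]: d₁ · t³ ≤ ∫₀^t ∫_{ℝ^d} f_s(ξ) μ(dξ) ds ≤ d₂ · t. -/
/-!
For `0 ≤ s ≤ 1` the bounds `|sin x| ≤ |x|` and `|sin x| ≤ 1` give `f_s(ξ) ≤ 2 (1 + |ξ|²)⁻¹`,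
whose `μ`-integral is finite by Dalang's condition; integrating over `s ∈ (0, t]` gives the
linear upper bound. For the lower bound pick a closed ball of radius `R` with positive measure
(finite, again by Dalang's condition). When `s R ≤ 1/4`, Jordan's inequality `2x/π ≤ sin x`
on `[0, π/2]` gives `f_s ≥ (2s/π)²` on that ball, and integrating over `s ∈ (T/2, T]` with
`T = t/(4R + 1)` produces a multiple of `t³`.
-/

open MeasureTheory Real
open scoped Real Classical
open Metric Set

noncomputable def waveFourierSq {E : Type*} [NormedAddCommGroup E] (s : ℝ) (ξ : E) : ℝ :=
  if ξ = 0 then s ^ 2 else (sin (2 * π * s * ‖ξ‖) / (2 * π * ‖ξ‖)) ^ 2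

section Pointwise

variable {E : Type*} [NormedAddCommGroup E]

lemma waveFourierSq_le_sq (s : ℝ) (ξ : E) : waveFourierSq s ξ ≤ s ^ 2 := by
  unfold waveFourierSq
  split_ifs with hξ
  · exact le_rfl
  · have : 0 < ‖ξ‖ := norm_pos_iff.2 hξ
    rw [div_pow, div_le_iff₀ (by positivity)]
    calc sin (2 * π * s * ‖ξ‖) ^ 2 ≤ (2 * π * s * ‖ξ‖) ^ 2 := sin_sq_le_sq
      _ = s ^ 2 * (2 * π * ‖ξ‖) ^ 2 := by ring

lemma waveFourierSq_le_inv_norm_sq {ξ : E} (hξ : ξ ≠ 0) (s : ℝ) :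
    waveFourierSq s ξ ≤ (‖ξ‖ ^ 2)⁻¹ := by
  have : 0 < ‖ξ‖ := norm_pos_iff.2 hξ
  rw [waveFourierSq, if_neg hξ, div_pow, inv_eq_one_div]
  refine div_le_div₀ zero_le_one (sin_sq_le_one _) (by positivity) ?_
  calc ‖ξ‖ ^ 2 ≤ (2 * π) ^ 2 * ‖ξ‖ ^ 2 :=
        le_mul_of_one_le_left (by positivity) (by nlinarith [pi_gt_three])
    _ = (2 * π * ‖ξ‖) ^ 2 := by ring

lemma waveFourierSq_le_two_mul_inv {s : ℝ} (hs : |s| ≤ 1) (ξ : E) :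
    waveFourierSq s ξ ≤ 2 * (1 + ‖ξ‖ ^ 2)⁻¹ := by
  rw [← div_eq_mul_inv]
  rcases le_total ‖ξ‖ 1 with hξ | hξ
  · calc waveFourierSq s ξ ≤ s ^ 2 := waveFourierSq_le_sq s ξ
      _ ≤ 1 := (sq_le_one_iff_abs_le_one s).2 hs
      _ ≤ 2 / (1 + ‖ξ‖ ^ 2) := by
        rw [le_div_iff₀ (by positivity)]
        nlinarith [norm_nonneg ξ]
  · have hξ0 : ξ ≠ 0 := norm_pos_iff.1 (by linarith)
    calc waveFourierSq s ξ ≤ (‖ξ‖ ^ 2)⁻¹ := waveFourierSq_le_inv_norm_sq hξ0 s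
      _ ≤ 2 / (1 + ‖ξ‖ ^ 2) := by
        rw [inv_eq_one_div, div_le_div_iff₀ (by positivity) (by positivity)]
        nlinarith

lemma sq_two_div_pi_mul_le_waveFourierSq {s : ℝ} (hs : 0 ≤ s) {ξ : E}
    (hsξ : s * ‖ξ‖ ≤ 1 / 4) : (2 / π * s) ^ 2 ≤ waveFourierSq s ξ := by
  unfold waveFourierSq
  split_ifs with hξ
  · have : 2 / π ≤ 1 := (div_le_one pi_pos).2 (by linarith [pi_gt_three])
    exact pow_le_pow_left₀ (by positivity) (mul_le_of_le_one_left hs this) 2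
  · have : 0 < ‖ξ‖ := norm_pos_iff.2 hξ
    gcongr
    rw [le_div_iff₀ (by positivity)]
    calc 2 / π * s * (2 * π * ‖ξ‖) = 2 / π * (2 * π * s * ‖ξ‖) := by ring
      _ ≤ sin (2 * π * s * ‖ξ‖) := mul_le_sin (by positivity) (by nlinarith [pi_pos])

end Pointwise

lemma const_mul_measure_le_setLIntegral {α : Type*} [MeasurableSpace α] {μ : Measure α}
    {s t : Set α} (hs : MeasurableSet s) (hst : s ⊆ t) {c : ENNReal} {g : α → ENNReal}
    (h : ∀ x ∈ s, c ≤ g x) : c * μ s ≤ ∫⁻ x in t, g x ∂μ :=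
  calc c * μ s = ∫⁻ _ in s, c ∂μ := (setLIntegral_const s c).symm
    _ ≤ ∫⁻ x in s, g x ∂μ := setLIntegral_mono' hs h
    _ ≤ ∫⁻ x in t, g x ∂μ := lintegral_mono_set hst

lemma const_mul_measure_le_lintegral {α : Type*} [MeasurableSpace α] {μ : Measure α}
    {s : Set α} (hs : MeasurableSet s) {c : ENNReal} {g : α → ENNReal}
    (h : ∀ x ∈ s, c ≤ g x) : c * μ s ≤ ∫⁻ x, g x ∂μ := by
  simpa using const_mul_measure_le_setLIntegral hs (subset_univ s) h

lemma exists_measure_closedBall_nat_ne_zero {X : Type*} [PseudoMetricSpace X]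
    [MeasurableSpace X] {μ : Measure X} (hμ : μ ≠ 0) (x : X) :
    ∃ n : ℕ, μ (closedBall x n) ≠ 0 := by
  by_contra! h
  exact hμ (Measure.measure_univ_eq_zero.1 (iUnion_closedBall_nat x ▸ measure_iUnion_null h))

section Spectral

variable {E : Type*} [NormedAddCommGroup E] [MeasurableSpace E] {μ : Measure E}

lemma measure_closedBall_ne_top_of_lintegral_lt_top
    [OpensMeasurableSpace E] (hμ : ∫⁻ ξ, ENNReal.ofReal ((1 + ‖ξ‖ ^ 2)⁻¹) ∂μ < ⊤) (R : ℝ) :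
    μ (closedBall 0 R) ≠ ⊤ := by
  have hc : ENNReal.ofReal ((1 + R ^ 2)⁻¹) ≠ 0 := (ENNReal.ofReal_pos.2 (by positivity)).ne'
  have key : ENNReal.ofReal ((1 + R ^ 2)⁻¹) * μ (closedBall 0 R)
      ≤ ∫⁻ ξ, ENNReal.ofReal ((1 + ‖ξ‖ ^ 2)⁻¹) ∂μ :=
    const_mul_measure_le_lintegral measurableSet_closedBall fun ξ hξ ↦ by
      have := mem_closedBall_zero_iff.1 hξ
      gcongr
  intro htop
  rw [htop, ENNReal.mul_top hc, top_le_iff] at key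
  exact hμ.ne key

lemma lintegral_waveFourierSq_le {s : ℝ} (hs : |s| ≤ 1) :
    ∫⁻ ξ, ENNReal.ofReal (waveFourierSq s ξ) ∂μ
      ≤ 2 * ∫⁻ ξ, ENNReal.ofReal ((1 + ‖ξ‖ ^ 2)⁻¹) ∂μ :=
  calc ∫⁻ ξ, ENNReal.ofReal (waveFourierSq s ξ) ∂μ
      ≤ ∫⁻ ξ, 2 * ENNReal.ofReal ((1 + ‖ξ‖ ^ 2)⁻¹) ∂μ := lintegral_mono fun ξ ↦ by
        rw [← ENNReal.ofReal_ofNat 2, ← ENNReal.ofReal_mul zero_le_two]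
        exact ENNReal.ofReal_le_ofReal (waveFourierSq_le_two_mul_inv hs ξ)
    _ = 2 * ∫⁻ ξ, ENNReal.ofReal ((1 + ‖ξ‖ ^ 2)⁻¹) ∂μ :=
        lintegral_const_mul' 2 _ ENNReal.ofNat_ne_top

lemma ofReal_mul_measure_closedBall_le_lintegral_waveFourierSq [OpensMeasurableSpace E]
    {s R : ℝ} (hs : 0 ≤ s) (hsR : s * R ≤ 1 / 4) :
    ENNReal.ofReal ((2 / π * s) ^ 2) * μ (closedBall 0 R)
      ≤ ∫⁻ ξ, ENNReal.ofReal (waveFourierSq s ξ) ∂μ :=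
  const_mul_measure_le_lintegral measurableSet_closedBall fun _ hξ ↦
    ENNReal.ofReal_le_ofReal <| sq_two_div_pi_mul_le_waveFourierSq hs <|
      (mul_le_mul_of_nonneg_left (mem_closedBall_zero_iff.1 hξ) hs).trans hsR

lemma setLIntegral_Ioc_lintegral_waveFourierSq_le {t : ℝ} (ht : t ≤ 1) :
    ∫⁻ s in Ioc 0 t, ∫⁻ ξ, ENNReal.ofReal (waveFourierSq s ξ) ∂μ
      ≤ 2 * (∫⁻ ξ, ENNReal.ofReal ((1 + ‖ξ‖ ^ 2)⁻¹) ∂μ) * ENNReal.ofReal t :=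
  calc ∫⁻ s in Ioc 0 t, ∫⁻ ξ, ENNReal.ofReal (waveFourierSq s ξ) ∂μ
      ≤ ∫⁻ _ in Ioc 0 t, 2 * ∫⁻ ξ, ENNReal.ofReal ((1 + ‖ξ‖ ^ 2)⁻¹) ∂μ :=
        setLIntegral_mono' measurableSet_Ioc fun s hs ↦
          lintegral_waveFourierSq_le (abs_le.2 ⟨by linarith [hs.1], hs.2.trans ht⟩)
    _ = 2 * (∫⁻ ξ, ENNReal.ofReal ((1 + ‖ξ‖ ^ 2)⁻¹) ∂μ) * ENNReal.ofReal t := by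
        rw [setLIntegral_const, Real.volume_Ioc, sub_zero]

lemma ofReal_mul_measure_closedBall_le_setLIntegral_Ioc [OpensMeasurableSpace E]
    {T t R : ℝ} (hT : 0 ≤ T) (hTt : T ≤ t) (hR : 0 ≤ R) (hTR : T * R ≤ 1 / 4) :
    ENNReal.ofReal (T ^ 3 / (2 * π ^ 2)) * μ (closedBall 0 R)
      ≤ ∫⁻ s in Ioc 0 t, ∫⁻ ξ, ENNReal.ofReal (waveFourierSq s ξ) ∂μ :=
  calc ENNReal.ofReal (T ^ 3 / (2 * π ^ 2)) * μ (closedBall 0 R)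
      = ENNReal.ofReal ((T / π) ^ 2) * μ (closedBall 0 R) * volume (Ioc (T / 2) T) := by
        rw [Real.volume_Ioc, mul_right_comm, ← ENNReal.ofReal_mul (by positivity)]
        congr 2
        field_simp
        ring
    _ ≤ _ := by
        refine const_mul_measure_le_setLIntegral measurableSet_Ioc
          (Ioc_subset_Ioc (by positivity) hTt) fun s ⟨hs, hsT⟩ ↦ ?_
        have hs0 : 0 ≤ s := by linarith
        have hTs : T / π ≤ 2 / π * s := by
          rw [show T / π = 2 / π * (T / 2) by ring]
          exact mul_le_mul_of_nonneg_left hs.le (by positivity)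
        calc ENNReal.ofReal ((T / π) ^ 2) * μ (closedBall 0 R)
            ≤ ENNReal.ofReal ((2 / π * s) ^ 2) * μ (closedBall 0 R) := by
              gcongr
          _ ≤ _ := ofReal_mul_measure_closedBall_le_lintegral_waveFourierSq hs0
              ((mul_le_mul_of_nonneg_right hsT hR).trans hTR)

end Spectral

theorem wave_fourier_spectral_two_sided_bound_general
    (d : ℕ)
    (μ : Measure (EuclideanSpace ℝ (Fin d))) (hμ : μ ≠ 0)
    (hdalang : ∫⁻ ξ, ENNReal.ofReal ((1 + ‖ξ‖ ^ 2)⁻¹) ∂μ < ⊤)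
    (f : ℝ → EuclideanSpace ℝ (Fin d) → ℝ)
    (hf : ∀ (s : ℝ) (ξ : EuclideanSpace ℝ (Fin d)),
      f s ξ = if ξ = 0 then s ^ 2
              else (Real.sin (2 * π * s * ‖ξ‖) / (2 * π * ‖ξ‖)) ^ 2) :
    ∃ d₁ > (0 : ℝ), ∃ d₂ > (0 : ℝ), ∀ t ∈ Set.Icc (0 : ℝ) 1,
      ENNReal.ofReal (d₁ * t ^ 3)
          ≤ (∫⁻ s in Set.Ioc (0 : ℝ) t, ∫⁻ ξ, ENNReal.ofReal (f s ξ) ∂μ) ∧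
      (∫⁻ s in Set.Ioc (0 : ℝ) t, ∫⁻ ξ, ENNReal.ofReal (f s ξ) ∂μ)
          ≤ ENNReal.ofReal (d₂ * t) := by
  obtain rfl : f = waveFourierSq := funext₂ fun s ξ ↦ by rw [hf, waveFourierSq]; congr
  set K := ∫⁻ ξ, ENNReal.ofReal ((1 + ‖ξ‖ ^ 2)⁻¹) ∂μ
  obtain ⟨n, hm0⟩ := exists_measure_closedBall_nat_ne_zero hμ 0
  have hmtop := measure_closedBall_ne_top_of_lintegral_lt_top hdalang n
  set m := μ (closedBall 0 n)
  have hm : 0 < m.toReal := ENNReal.toReal_pos hm0 hmtop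
  refine ⟨m.toReal / (2 * π ^ 2 * (4 * n + 1) ^ 3), by positivity, 2 * K.toReal + 1, by positivity,
    fun t ⟨ht0, ht1⟩ ↦ ⟨?_, ?_⟩⟩
  · have hTt : t / (4 * n + 1) ≤ t := div_le_self ht0 (by linarith [n.cast_nonneg (α := ℝ)])
    have hTn : t / (4 * n + 1) * n ≤ 1 / 4 := by
      rw [div_mul_eq_mul_div, div_le_iff₀ (by positivity)]
      nlinarith [n.cast_nonneg (α := ℝ)]
    calc ENNReal.ofReal (m.toReal / (2 * π ^ 2 * (4 * n + 1) ^ 3) * t ^ 3)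
        = ENNReal.ofReal ((t / (4 * n + 1)) ^ 3 / (2 * π ^ 2)) * m := by
          conv_rhs => rw [← ENNReal.ofReal_toReal hmtop]
          rw [← ENNReal.ofReal_mul (by positivity)]
          congr 1
          field_simp
      _ ≤ _ := ofReal_mul_measure_closedBall_le_setLIntegral_Ioc (by positivity) hTt
          n.cast_nonneg hTn
  · calc _ ≤ 2 * K * ENNReal.ofReal t := setLIntegral_Ioc_lintegral_waveFourierSq_le ht1
      _ = ENNReal.ofReal (2 * K.toReal * t) := by
          rw [ENNReal.ofReal_mul (by positivity), ENNReal.ofReal_mul zero_le_two,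
            ENNReal.ofReal_toReal hdalang.ne, ENNReal.ofReal_ofNat]
      _ ≤ ENNReal.ofReal ((2 * K.toReal + 1) * t) := ENNReal.ofReal_le_ofReal (by nlinarith)

/-- Two-sided bound `d₁ t³ ≤ ∫₀^t ∫_{ℝ^d} |𝓕Γ^d_s(ξ)|² μ(dξ) ds ≤ d₂ t` for `t ∈ [0,1]`,
where `|𝓕Γ^d_s(ξ)|² = (sin(2πs|ξ|)/(2π|ξ|))²` (value `s²` at `ξ = 0`), under Dalang's
condition on the nonzero spectral measure `μ`. -/
theorem wave_fourier_spectral_two_sided_bound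
    (d : ℕ) (hd : 1 ≤ d)
    (μ : Measure (EuclideanSpace ℝ (Fin d))) (hμ : μ ≠ 0)
    (hdalang : ∫⁻ ξ, ENNReal.ofReal ((1 + ‖ξ‖ ^ 2)⁻¹) ∂μ < ⊤)
    (f : ℝ → EuclideanSpace ℝ (Fin d) → ℝ)
    (hf : ∀ (s : ℝ) (ξ : EuclideanSpace ℝ (Fin d)),
      f s ξ = if ξ = 0 then s ^ 2
              else (Real.sin (2 * π * s * ‖ξ‖) / (2 * π * ‖ξ‖)) ^ 2) :
    ∃ d₁ > (0 : ℝ), ∃ d₂ > (0 : ℝ), ∀ t ∈ Set.Icc (0 : ℝ) 1,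
      ENNReal.ofReal (d₁ * t ^ 3)
          ≤ (∫⁻ s in Set.Ioc (0 : ℝ) t, ∫⁻ ξ, ENNReal.ofReal (f s ξ) ∂μ) ∧
      (∫⁻ s in Set.Ioc (0 : ℝ) t, ∫⁻ ξ, ENNReal.ofReal (f s ξ) ∂μ)
          ≤ ENNReal.ofReal (d₂ * t) :=
  wave_fourier_spectral_two_sided_bound_general d μ hμ hdalang f hf
end

section
/- Let t₀ < t₁ be real numbers, let a, b ≥ 0, and let f : [t₀, t₁] → [0, ∞) be a bounded measurable function satisfying f(ν) ≤ a + b · ∫_{t₀}^{ν} f(s) · (ν − s)^{-1/2} ds for every ν ∈ [t₀, t₁]. Then there exists a constant C > 0, depending only on b and t₁ − t₀ (and not on a or f), such that f(ν) ≤ C · a for every ν ∈ [t₀, t₁]. -/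
/-!
Split `∫_{t₀}^ν` at `ν - δ`. On `[ν - δ, ν]` the kernel has mass `2 √δ`, so once `2 b √δ ≤ 1/2`
that part is absorbed into the supremum of `f`, which is finite because `f` is bounded; on
`[t₀, ν - δ]` one uses the bound already known there. Hence a bound `A` on `[t₀, T]` becomes
`2 a + 4 b √L A` on `[t₀, T + δ]`, and `⌈L / δ⌉` such steps starting from `f t₀ ≤ a` give
`f ≤ (2 + 4 b √L) ^ ⌈L / δ⌉ a`.
-/

open MeasureTheory Real
open scoped Real

open Set intervalIntegral

-- For `x < 0` both sides are junk zeros: `√x = 0` and `x ^ (-1/2) = exp (…) * cos (-π/2) = 0`.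
lemma inv_sqrt_eq_rpow_neg_half (x : ℝ) : (√x)⁻¹ = x ^ (-(1 / 2) : ℝ) := by
  rcases le_or_gt 0 x with hx | hx
  · rw [rpow_neg hx, sqrt_eq_rpow]
  · rw [sqrt_eq_zero'.mpr hx.le, inv_zero, rpow_def_of_neg hx, neg_mul, cos_neg,
      one_div_mul_eq_div, cos_pi_div_two, mul_zero]

lemma integral_inv_sqrt_sub (ν u c : ℝ) :
    ∫ s in u..c, (√(ν - s))⁻¹ = 2 * √(ν - u) - 2 * √(ν - c) := by
  simp only [inv_sqrt_eq_rpow_neg_half]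
  rw [integral_comp_sub_left (fun x : ℝ => x ^ (-(1 / 2) : ℝ)) ν,
    integral_rpow (Or.inl (by norm_num))]
  norm_num
  rw [← sqrt_eq_rpow, ← sqrt_eq_rpow]
  ring

lemma intervalIntegrable_inv_sqrt_sub (ν u c : ℝ) :
    IntervalIntegrable (fun s => (√(ν - s))⁻¹) volume u c := by
  have h := (intervalIntegrable_rpow' (a := ν - u) (b := ν - c)
    (by norm_num : (-1 : ℝ) < -(1 / 2))).comp_sub_left ν
  simp only [sub_sub_cancel] at h
  simpa only [inv_sqrt_eq_rpow_neg_half] using h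

section KernelBounds

variable {f : ℝ → ℝ} {u m ν A M : ℝ}

lemma intervalIntegrable_mul_inv_sqrt_sub (hf : Measurable f) (hum : u ≤ m)
    (h0 : ∀ s ∈ Icc u m, 0 ≤ f s) (hM : ∀ s ∈ Icc u m, f s ≤ M) :
    IntervalIntegrable (fun s => f s * (√(ν - s))⁻¹) volume u m := by
  rw [intervalIntegrable_iff_integrableOn_Icc_of_le hum]
  refine ((intervalIntegrable_iff_integrableOn_Icc_of_le hum).mp
    (intervalIntegrable_inv_sqrt_sub ν u m)).bdd_mul (c := M)
    hf.aestronglyMeasurable.restrict ?_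
  filter_upwards [ae_restrict_mem measurableSet_Icc] with s hs
  rw [norm_of_nonneg (h0 s hs)]
  exact hM s hs

lemma integral_mul_inv_sqrt_sub_le (hf : Measurable f) (hum : u ≤ m)
    (h0 : ∀ s ∈ Icc u m, 0 ≤ f s) (hM : ∀ s ∈ Icc u m, f s ≤ M) :
    ∫ s in u..m, f s * (√(ν - s))⁻¹ ≤ M * (2 * √(ν - u) - 2 * √(ν - m)) := by
  rw [← integral_inv_sqrt_sub, ← intervalIntegral.integral_const_mul]
  exact integral_mono_on hum (intervalIntegrable_mul_inv_sqrt_sub hf hum h0 hM)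
    ((intervalIntegrable_inv_sqrt_sub ν u m).const_mul M)
    fun s hs => mul_le_mul_of_nonneg_right (hM s hs) (by positivity)

lemma integral_mul_inv_sqrt_sub_le_of_split (hf : Measurable f) (hum : u ≤ m) (hmν : m ≤ ν)
    (h0 : ∀ s ∈ Icc u ν, 0 ≤ f s) (hA : ∀ s ∈ Icc u m, f s ≤ A)
    (hM : ∀ s ∈ Icc m ν, f s ≤ M) :
    ∫ s in u..ν, f s * (√(ν - s))⁻¹ ≤ 2 * √(ν - u) * A + 2 * √(ν - m) * M := by
  have h0u : ∀ s ∈ Icc u m, 0 ≤ f s := fun s hs => h0 s ⟨hs.1, hs.2.trans hmν⟩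
  have h0m : ∀ s ∈ Icc m ν, 0 ≤ f s := fun s hs => h0 s ⟨hum.trans hs.1, hs.2⟩
  have hA0 : 0 ≤ A := (h0u u ⟨le_rfl, hum⟩).trans (hA u ⟨le_rfl, hum⟩)
  rw [← integral_add_adjacent_intervals (intervalIntegrable_mul_inv_sqrt_sub hf hum h0u hA)
    (intervalIntegrable_mul_inv_sqrt_sub hf hmν h0m hM)]
  have hu := integral_mul_inv_sqrt_sub_le (ν := ν) hf hum h0u hA
  have hm := integral_mul_inv_sqrt_sub_le (ν := ν) hf hmν h0m hM
  rw [sub_self, sqrt_zero] at hm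
  nlinarith [sqrt_nonneg (ν - m)]

end KernelBounds

lemma le_two_mul_of_le_add_half_bound {α : Type*} {E : Set α} {f : α → ℝ} {c : ℝ}
    (hbdd : BddAbove (f '' E)) (h : ∀ M, (∀ s ∈ E, f s ≤ M) → ∀ s ∈ E, f s ≤ c + M / 2) :
    ∀ s ∈ E, f s ≤ 2 * c := by
  intro s hs
  have hsup : ∀ x ∈ E, f x ≤ sSup (f '' E) := fun x hx => le_csSup hbdd ⟨x, hx, rfl⟩
  have : sSup (f '' E) ≤ c + sSup (f '' E) / 2 :=
    csSup_le ⟨f s, s, hs, rfl⟩ (by rintro _ ⟨x, hx, rfl⟩; exact h _ hsup x hx)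
  linarith [hsup s hs]

section Extend

variable {f : ℝ → ℝ} {t₀ t₁ a b δ T A : ℝ}

lemma singular_gronwall_extend_bound (hf : Measurable f) (hf0 : ∀ s ∈ Icc t₀ t₁, 0 ≤ f s)
    (hbdd : BddAbove (f '' Icc t₀ t₁))
    (hineq : ∀ ν ∈ Icc t₀ t₁, f ν ≤ a + b * ∫ s in t₀..ν, f s * (√(ν - s))⁻¹)
    (hb : 0 ≤ b) (hδ : 0 ≤ δ) (hbδ : 4 * b * √δ ≤ 1) (hT₀ : t₀ ≤ T)
    (hT : ∀ s ∈ Icc t₀ t₁, s ≤ T → f s ≤ A) :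
    ∀ s ∈ Icc t₀ t₁, s ≤ T + δ → f s ≤ 2 * a + 4 * b * √(t₁ - t₀) * A := by
  let E := {s ∈ Icc t₀ t₁ | s ≤ T + δ}
  suffices ∀ s ∈ E, f s ≤ 2 * (a + 2 * b * √(t₁ - t₀) * A) by
    intro s hs hsT; linarith [this s ⟨hs, hsT⟩]
  refine le_two_mul_of_le_add_half_bound (hbdd.mono (image_mono fun s hs => hs.1)) ?_
  rintro M hM ν ⟨⟨hν₀, hν₁⟩, hνT⟩
  set m := max t₀ (ν - δ)
  have hmν : m ≤ ν := max_le hν₀ (by linarith)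
  have hint := integral_mul_inv_sqrt_sub_le_of_split (A := A) (M := M) hf (le_max_left _ _) hmν
    (fun s hs => hf0 s ⟨hs.1, hs.2.trans hν₁⟩)
    (fun s hs => hT s ⟨hs.1, hs.2.trans (hmν.trans hν₁)⟩ (hs.2.trans (max_le hT₀ (by linarith))))
    (fun s hs => hM s ⟨⟨(le_max_left _ _).trans hs.1, hs.2.trans hν₁⟩, hs.2.trans hνT⟩)
  have hA0 : 0 ≤ A := (hf0 t₀ ⟨le_rfl, hν₀.trans hν₁⟩).trans (hT t₀ ⟨le_rfl, hν₀.trans hν₁⟩ hT₀)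
  have hM0 : 0 ≤ M := (hf0 ν ⟨hν₀, hν₁⟩).trans (hM ν ⟨⟨hν₀, hν₁⟩, hνT⟩)
  have hL : √(ν - t₀) ≤ √(t₁ - t₀) := sqrt_le_sqrt (by linarith)
  have hδm : √(ν - m) ≤ √δ := sqrt_le_sqrt (by linarith [le_max_right t₀ (ν - δ)])
  calc f ν ≤ a + b * (2 * √(ν - t₀) * A + 2 * √(ν - m) * M) :=
        (hineq ν ⟨hν₀, hν₁⟩).trans (by gcongr)
    _ ≤ a + b * (2 * √(t₁ - t₀) * A + 2 * √δ * M) := by gcongr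
    _ ≤ a + 2 * b * √(t₁ - t₀) * A + M / 2 := by nlinarith

end Extend

theorem gronwall_singular_kernel_general (b L : ℝ) (hb : 0 ≤ b) :
    ∃ C > (0 : ℝ), ∀ t₀ t₁ : ℝ, t₀ < t₁ → t₁ - t₀ = L →
      ∀ a : ℝ, 0 ≤ a → ∀ f : ℝ → ℝ, Measurable f →
        (∀ s ∈ Set.Icc t₀ t₁, 0 ≤ f s) →
        (∃ M : ℝ, ∀ s ∈ Set.Icc t₀ t₁, f s ≤ M) →
        (∀ ν ∈ Set.Icc t₀ t₁,
          f ν ≤ a + b * ∫ s in t₀..ν, f s * (Real.sqrt (ν - s))⁻¹) →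
        ∀ ν ∈ Set.Icc t₀ t₁, f ν ≤ C * a := by
  set δ := (4 * b + 1)⁻¹ ^ 2
  have hδ : 0 < δ := by positivity
  have hbδ : 4 * b * √δ ≤ 1 := by
    rw [sqrt_sq (by positivity), mul_inv_le_iff₀ (by positivity)]; linarith
  set q := 2 + 4 * b * √L
  have hq : 1 ≤ q := by have := sqrt_nonneg L; nlinarith
  refine ⟨q ^ ⌈L / δ⌉₊, by positivity, ?_⟩
  rintro t₀ t₁ ht rfl a ha f hf hf0 ⟨M, hM⟩ hineq
  have key : ∀ k : ℕ, ∀ s ∈ Icc t₀ t₁, s ≤ t₀ + k * δ → f s ≤ q ^ k * a := by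
    intro k
    induction k with
    | zero =>
      intro s hs hst
      obtain rfl : s = t₀ := le_antisymm (by simpa using hst) hs.1
      simpa using hineq s hs
    | succ k ih =>
      intro s hs hst
      have := singular_gronwall_extend_bound hf hf0 ⟨M, by rintro _ ⟨x, hx, rfl⟩; exact hM x hx⟩
        hineq hb hδ.le hbδ (le_add_of_nonneg_right (by positivity)) ih s hs (by push_cast at hst; linarith)
      have hqk : 1 ≤ q ^ k := one_le_pow₀ hq
      calc f s ≤ 2 * a + 4 * b * √(t₁ - t₀) * (q ^ k * a) := this
        _ ≤ q ^ (k + 1) * a := by rw [pow_succ]; nlinarith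
  intro ν hν
  refine key _ ν hν ?_
  have := (div_le_iff₀ hδ).mp (Nat.le_ceil ((t₁ - t₀) / δ))
  linarith [hν.2]

/-- Gronwall-type lemma with the singular kernel `(ν - s)^{-1/2}`: if a bounded
nonnegative measurable `f` on `[t₀, t₁]` satisfies
`f(ν) ≤ a + b ∫_{t₀}^ν f(s) (ν - s)^{-1/2} ds`, then `f(ν) ≤ C a`, where `C`
depends only on `b` and `L = t₁ - t₀`. -/
theorem gronwall_singular_kernel (b L : ℝ) (hb : 0 ≤ b) (hL : 0 < L) :
    ∃ C > (0 : ℝ), ∀ t₀ t₁ : ℝ, t₀ < t₁ → t₁ - t₀ = L →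
      ∀ a : ℝ, 0 ≤ a → ∀ f : ℝ → ℝ, Measurable f →
        (∀ s ∈ Set.Icc t₀ t₁, 0 ≤ f s) →
        (∃ M : ℝ, ∀ s ∈ Set.Icc t₀ t₁, f s ≤ M) →
        (∀ ν ∈ Set.Icc t₀ t₁,
          f ν ≤ a + b * ∫ s in t₀..ν, f s * (Real.sqrt (ν - s))⁻¹) →
        ∀ ν ∈ Set.Icc t₀ t₁, f ν ≤ C * a :=
  gronwall_singular_kernel_general b L hb
end
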